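/- Let M = (S²×S²) \ {(u,v) : u₃ = 0 and v₃ ≥ 0} with the subspace topology, let h : [−1,1] → ℝ be continuous with h ≥ 0 and h(z) = 0 if and only if z ≥ 0, and define F̃ : M → ℝ² by F̃(u,v) = (u₃, (v₃+2)/(u₃²+h(v₃))). Then F̃ is a proper map. -/

import Mathlib

/-!
Since `v₃ ≥ -1`, the second component of `F̃` is at least `1 / (u₃² + h(v₃))`. Hence on the
preimage of a compact set, where that component is bounded by some `C ≥ 1`, the denominator
stays `≥ 1 / C`. Inside the compact space `S² × S²` this inequality cuts out a compact set,
and it lies in `M` because the denominator vanishes exactly on `{u₃ = 0, v₃ ≥ 0}`.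
-/

open Set

noncomputable section

/-- The unit sphere in `ℝ³`. -/
def S2 : Set (EuclideanSpace ℝ (Fin 3)) := {u | ‖u‖ = 1}

/-- `M = (S²×S²) \ {(u,v) : u₃ = 0 and v₃ ≥ 0}`. -/
def Msp : Set (EuclideanSpace ℝ (Fin 3) × EuclideanSpace ℝ (Fin 3)) :=
  (S2 ×ˢ S2) \ {p | p.1 2 = 0 ∧ 0 ≤ p.2 2}

theorem isProperMap_domRestrict_of_preimage_subset_isCompact {X Y : Type*} [TopologicalSpace X]
    [TopologicalSpace Y] [T2Space X] [T2Space Y] [CompactlyCoherentSpace Y]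
    {s : Set X} {f : X → Y} (hf : ContinuousOn f s)
    (h : ∀ K, IsCompact K → ∃ A, IsCompact A ∧ A ⊆ s ∧ s ∩ f ⁻¹' K ⊆ A) :
    IsProperMap (s.domRestrict f) := by
  refine isProperMap_iff_isCompact_preimage.2 ⟨hf.domRestrict, fun K hK => ?_⟩
  obtain ⟨A, hA, hAs, hsA⟩ := h K hK
  have hAK : IsCompact (A ∩ f ⁻¹' K) :=
    hA.of_isClosed_subset
      ((hf.mono hAs).preimage_isClosed_of_isClosed hA.isClosed hK.isClosed) inter_subset_left
  have hval : ((↑) : s → X) '' (s.domRestrict f ⁻¹' K) = A ∩ f ⁻¹' K :=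
    (Subtype.image_preimage_coe s (f ⁻¹' K)).trans <|
      Subset.antisymm (subset_inter hsA inter_subset_right) fun x hx => ⟨hAs hx.1, hx.2⟩
  rwa [Subtype.isCompact_iff, hval]

theorem S2_eq_sphere : S2 = Metric.sphere 0 1 := by
  ext u
  simp [S2]

theorem isCompact_S2 : IsCompact S2 :=
  S2_eq_sphere ▸ isCompact_sphere 0 1

theorem apply_mem_Icc_of_mem_S2 {u : EuclideanSpace ℝ (Fin 3)} (hu : u ∈ S2) (i : Fin 3) :
    u i ∈ Icc (-1 : ℝ) 1 := by
  have : |u i| ≤ 1 := (hu : ‖u‖ = 1) ▸ PiLp.norm_apply_le u i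
  exact abs_le.1 this

def denom (h : ℝ → ℝ) (p : EuclideanSpace ℝ (Fin 3) × EuclideanSpace ℝ (Fin 3)) : ℝ :=
  p.1 2 ^ 2 + h (p.2 2)

section

variable {h : ℝ → ℝ}

theorem continuousOn_denom (hcont : ContinuousOn h (Icc (-1 : ℝ) 1)) :
    ContinuousOn (denom h) (S2 ×ˢ S2) := by
  refine ContinuousOn.add (by fun_prop) <| hcont.comp (by fun_prop) fun p hp => ?_
  exact apply_mem_Icc_of_mem_S2 hp.2 2

theorem isCompact_S2_prod_S2_inter_denom_ge (hcont : ContinuousOn h (Icc (-1 : ℝ) 1)) (ε : ℝ) :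
    IsCompact ((S2 ×ˢ S2) ∩ denom h ⁻¹' Ici ε) :=
  (isCompact_S2.prod isCompact_S2).of_isClosed_subset
    ((continuousOn_denom hcont).preimage_isClosed_of_isClosed
      (isCompact_S2.prod isCompact_S2).isClosed isClosed_Ici) inter_subset_left

theorem sq_add_pos_iff (hnn : ∀ z ∈ Icc (-1 : ℝ) 1, 0 ≤ h z)
    (hzero : ∀ z ∈ Icc (-1 : ℝ) 1, (h z = 0 ↔ 0 ≤ z)) {a z : ℝ} (hz : z ∈ Icc (-1 : ℝ) 1) :
    0 < a ^ 2 + h z ↔ ¬(a = 0 ∧ 0 ≤ z) := by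
  rw [← hzero z hz, ← sq_eq_zero_iff (a := a), ← add_eq_zero_iff_of_nonneg (sq_nonneg a)
    (hnn z hz)]
  exact (add_nonneg (sq_nonneg a) (hnn z hz)).lt_iff_ne'

theorem Msp_eq (hnn : ∀ z ∈ Icc (-1 : ℝ) 1, 0 ≤ h z)
    (hzero : ∀ z ∈ Icc (-1 : ℝ) 1, (h z = 0 ↔ 0 ≤ z)) :
    Msp = (S2 ×ˢ S2) ∩ {p | 0 < denom h p} := by
  ext p
  simp only [Msp, denom, mem_sdiff, mem_inter_iff, mem_ofPred_eq]
  exact and_congr_right fun hp => (sq_add_pos_iff hnn hzero (apply_mem_Icc_of_mem_S2 hp.2 2)).symm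

end

theorem one_div_le_of_add_two_div_le {z g C : ℝ} (hz : -1 ≤ z) (hg : 0 < g)
    (hC : (z + 2) / g ≤ C) : 1 / C ≤ g := by
  have hle : 1 / g ≤ C := (div_le_div_of_nonneg_right (by linarith) hg.le).trans hC
  simpa using one_div_le_one_div_of_le (one_div_pos.2 hg) hle

/-- Let `h : [−1,1] → ℝ` be continuous with `h ≥ 0` and `h(z) = 0 ↔ z ≥ 0`. Then the
map `F̃(u,v) = (u₃, (v₃+2)/(u₃²+h(v₃)))` on `M` is proper. -/
theorem Ftilde_proper (h : ℝ → ℝ)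
    (hcont : ContinuousOn h (Icc (-1 : ℝ) 1))
    (hnn : ∀ z ∈ Icc (-1 : ℝ) 1, 0 ≤ h z)
    (hzero : ∀ z ∈ Icc (-1 : ℝ) 1, (h z = 0 ↔ 0 ≤ z)) :
    IsProperMap (Msp.restrict fun p => (p.1 2, (p.2 2 + 2) / ((p.1 2) ^ 2 + h (p.2 2)))) := by
  have hM := Msp_eq hnn hzero
  refine isProperMap_domRestrict_of_preimage_subset_isCompact ?_ fun K hK => ?_
  · refine ContinuousOn.prodMk (by fun_prop) <| ContinuousOn.div (by fun_prop)
      ((continuousOn_denom hcont).mono ?_) ?_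
    · exact sdiff_subset
    · intro p hp
      rw [hM] at hp
      exact hp.2.ne'
  · obtain ⟨C, hC₁, hC⟩ := (bddAbove_iff_exists_ge 1).1 (hK.image continuous_snd).bddAbove
    refine ⟨(S2 ×ˢ S2) ∩ denom h ⁻¹' Ici (1 / C), ?_, ?_, ?_⟩
    · exact isCompact_S2_prod_S2_inter_denom_ge hcont _
    · rw [hM]
      exact fun p hp => ⟨hp.1, (one_div_pos.2 (zero_lt_one.trans_le hC₁)).trans_le hp.2⟩
    · rintro p ⟨hpM, hpK⟩
      rw [hM] at hpM
      exact ⟨hpM.1, one_div_le_of_add_two_div_le (apply_mem_Icc_of_mem_S2 hpM.1.2 2).1 hpM.2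
        (hC _ ⟨_, hpK, rfl⟩)⟩
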